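/- arXiv:1211.6898 — 3 statements merged into one kernel-verified Lean document; each statement's English description precedes it below -/
import Mathlib

section
/- In Approximate Value Iteration, with π_{i+1} any policy greedy with respect to v_i, one has by induction T_{π_k} v_{k−1} = T_{π_k} T_{π_{k−1}} ⋯ T_{π_{k−m+1}} v_{k−m} + Σ_{i=1}^{m−1} Γ_{k,i} ε_{k−i} for all 1 ≤ m ≤ k. -/
open Finset Filter

variable {S A : Type*} [Fintype S] [Nonempty S] [DecidableEq S] [Fintype A] [Nonempty A]

/-- `P s a s'` is the probability of moving to `s'` when taking action `a` in state `s`. -/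
def IsStochastic (P : S → A → S → ℝ) : Prop :=
  (∀ s a s', 0 ≤ P s a s') ∧ ∀ s a, ∑ s', P s a s' = 1

/-- Bellman operator `T_π` of a stationary deterministic policy `π`. -/
noncomputable def Tpol (P : S → A → S → ℝ) (r : S → A → ℝ) (γ : ℝ)
    (π : S → A) (v : S → ℝ) : S → ℝ :=
  fun s => r s (π s) + γ * ∑ s', P s (π s) s' * v s'

/-- Bellman optimality operator `T`. -/
noncomputable def Topt (P : S → A → S → ℝ) (r : S → A → ℝ) (γ : ℝ) (v : S → ℝ) : S → ℝ :=
  fun s => univ.sup' univ_nonempty (fun a => r s a + γ * ∑ s', P s a s' * v s')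

/-- Application of the transition matrix `P_π` to a value function. -/
noncomputable def Pap (P : S → A → S → ℝ) (π : S → A) (v : S → ℝ) : S → ℝ :=
  fun s => ∑ s', P s (π s) s' * v s'

/-- `Tcomp P r γ πs k m = T_{π_k} T_{π_{k-1}} ⋯ T_{π_{k-m+1}}`. -/
noncomputable def Tcomp (P : S → A → S → ℝ) (r : S → A → ℝ) (γ : ℝ)
    (πs : ℕ → S → A) : ℕ → ℕ → (S → ℝ) → (S → ℝ)
  | _, 0, v => v
  | k, m+1, v => Tpol P r γ (πs k) (Tcomp P r γ πs (k-1) m v)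

/-- `Gap P γ πs k m = (γP_{π_k})(γP_{π_{k-1}})⋯(γP_{π_{k-m+1}})` applied to a value function. -/
noncomputable def Gap (P : S → A → S → ℝ) (γ : ℝ)
    (πs : ℕ → S → A) : ℕ → ℕ → (S → ℝ) → (S → ℝ)
  | _, 0, v => v
  | k, m+1, v => γ • Pap P (πs k) (Gap P γ πs (k-1) m v)

/-! `T_π` is affine with linear part `γ P_π`, so the composite `T_{π_k} ⋯ T_{π_{k-m+1}}` is affine
with linear part `Γ_{k,m}`. Since `π_{j+1}` is greedy for `v_j`, the AVI step reads
`v_{j+1} = T_{π_{j+1}} v_j + ε_{j+1}`; substituting this for `v_{k-m}` moves one more operator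
into the composite and splits off the error term `Γ_{k,m} ε_{k-m}`. -/

section

variable (P : S → A → S → ℝ) (r : S → A → ℝ) (γ : ℝ) (πs : ℕ → S → A)

omit [Nonempty S] [DecidableEq S] [Fintype A] [Nonempty A] in
theorem Tpol_add (π : S → A) (u w : S → ℝ) :
    Tpol P r γ π (u + w) = Tpol P r γ π u + γ • Pap P π w := by
  funext s
  simp only [Tpol, Pap, Pi.add_apply, Pi.smul_apply, smul_eq_mul, mul_add, sum_add_distrib]
  ring

omit [Nonempty S] [DecidableEq S] [Fintype A] [Nonempty A] in
theorem Tcomp_add (m k : ℕ) (u w : S → ℝ) :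
    Tcomp P r γ πs k m (u + w) = Tcomp P r γ πs k m u + Gap P γ πs k m w := by
  induction m generalizing k with
  | zero => rfl
  | succ m ih => simp only [Tcomp, Gap, ih, Tpol_add]

omit [Nonempty S] [DecidableEq S] [Fintype A] [Nonempty A] in
theorem Tcomp_succ_eq_Tcomp_Tpol (m k : ℕ) (u : S → ℝ) :
    Tcomp P r γ πs k (m + 1) u = Tcomp P r γ πs k m (Tpol P r γ (πs (k - m)) u) := by
  induction m generalizing k with
  | zero => rfl
  | succ m ih =>
    rw [Tcomp, ih, Tcomp, Nat.sub_sub, Nat.add_comm 1 m]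

omit [Nonempty S] [DecidableEq S] [Fintype A] [Nonempty A] in
theorem Tpol_eq_Tcomp_add_sum_Gap {v εf : ℕ → S → ℝ}
    (hv : ∀ j, v (j + 1) = Tpol P r γ (πs (j + 1)) (v j) + εf (j + 1)) {k n : ℕ}
    (hnk : n + 1 ≤ k) :
    Tpol P r γ (πs k) (v (k - 1)) =
      Tcomp P r γ πs k (n + 1) (v (k - (n + 1))) + ∑ i ∈ Icc 1 n, Gap P γ πs k i (εf (k - i)) := by
  induction n with
  | zero => simp [Tcomp]
  | succ n ih =>
    have hstep : v (k - (n + 1)) =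
        Tpol P r γ (πs (k - (n + 1))) (v (k - (n + 2))) + εf (k - (n + 1)) := by
      obtain ⟨j, hj⟩ : ∃ j, k - (n + 1) = j + 1 := ⟨k - (n + 2), by omega⟩
      rw [hj, hv, show k - (n + 2) = j by omega]
    rw [ih (by omega), hstep, Tcomp_add, ← Tcomp_succ_eq_Tcomp_Tpol, sum_Icc_succ_top (by omega)]
    abel

end

theorem avi_greedy_decomposition_general (P : S → A → S → ℝ) (r : S → A → ℝ) (γ : ℝ)
    (v : ℕ → S → ℝ) (εf : ℕ → S → ℝ) (πs : ℕ → S → A)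
    (hAVI : ∀ k : ℕ, v (k+1) = Topt P r γ (v k) + εf (k+1))
    (hgreedy : ∀ i : ℕ, Tpol P r γ (πs (i+1)) (v i) = Topt P r γ (v i)) :
    ∀ k m : ℕ, 1 ≤ m → m ≤ k →
      Tpol P r γ (πs k) (v (k-1)) =
        Tcomp P r γ πs k m (v (k-m)) + ∑ i ∈ Finset.Icc 1 (m-1), Gap P γ πs k i (εf (k-i)) := by
  have hv : ∀ j, v (j+1) = Tpol P r γ (πs (j+1)) (v j) + εf (j+1) := fun j => by
    rw [hAVI, hgreedy]
  intro k m hm hmk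
  obtain ⟨n, rfl⟩ : ∃ n, m = n + 1 := ⟨m - 1, by omega⟩
  exact Tpol_eq_Tcomp_add_sum_Gap P r γ πs hv hmk

/-- In AVI with greedy policies,
`T_{π_k} v_{k−1} = T_{π_k} ⋯ T_{π_{k−m+1}} v_{k−m} + Σ_{i=1}^{m−1} Γ_{k,i} ε_{k−i}`. -/
theorem avi_greedy_decomposition (P : S → A → S → ℝ) (r : S → A → ℝ) (γ : ℝ)
    (hP : IsStochastic P) (hγ0 : 0 < γ) (hγ1 : γ < 1)
    (v : ℕ → S → ℝ) (εf : ℕ → S → ℝ) (πs : ℕ → S → A)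
    (hAVI : ∀ k : ℕ, v (k+1) = Topt P r γ (v k) + εf (k+1))
    (hgreedy : ∀ i : ℕ, Tpol P r γ (πs (i+1)) (v i) = Topt P r γ (v i)) :
    ∀ k m : ℕ, 1 ≤ m → m ≤ k →
      Tpol P r γ (πs k) (v (k-1)) =
        Tcomp P r γ πs k m (v (k-m)) + ∑ i ∈ Finset.Icc 1 (m-1), Gap P γ πs k i (εf (k-i)) :=
  avi_greedy_decomposition_general P r γ v εf πs hAVI hgreedy
end

section
/- AVI non-stationary evaluation lemma: for all m and k with 1 ≤ m ≤ k, ‖T v_{k−1} − v_{π_{k,m}}‖_∞ ≤ γ^m ‖v_{k−m} − v_{π_{k,m}}‖_∞ + (γ − γ^m)/(1 − γ) · ε. -/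
open Finset Filter

variable {S A : Type*} [Fintype S] [Nonempty S] [DecidableEq S] [Fintype A] [Nonempty A]

/-!
Approximate value iteration is a perturbed run of the policies it selects: since `π_{i+1}` is greedy
for `v_i`, the update reads `v_{i+1} = T_{π_{i+1}} v_i + ε_{i+1}`. Unrolling the last `m - 1` steps and
using that each `T_π` is a `γ`-contraction in the sup norm, `v_{k-1}` lies within
`γ^{m-1} ‖v_{k-m} - w‖ + (1 + γ + ⋯ + γ^{m-2}) ε` of `T_{π_{k-1}} ⋯ T_{π_{k-m+1}} w`; applying `T_{π_k}`
to both sides, with `w = v_{π_{k,m}}` its fixed point, gives the claim.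
-/

section

variable {S A : Type*} [Fintype S] {P : S → A → S → ℝ} {r : S → A → ℝ} {γ : ℝ}

lemma IsStochastic.abs_sum_mul_le_norm (hP : IsStochastic P) (s : S) (a : A) (u : S → ℝ) :
    |∑ s', P s a s' * u s'| ≤ ‖u‖ :=
  calc |∑ s', P s a s' * u s'| ≤ ∑ s', |P s a s' * u s'| := abs_sum_le_sum_abs _ _
    _ ≤ ∑ s', P s a s' * ‖u‖ := by
        refine sum_le_sum fun s' _ => ?_
        rw [abs_mul, abs_of_nonneg (hP.1 s a s')]
        exact mul_le_mul_of_nonneg_left (norm_le_pi_norm u s') (hP.1 s a s')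
    _ = ‖u‖ := by rw [← sum_mul, hP.2 s a, one_mul]

lemma norm_Tpol_sub_Tpol_le (hP : IsStochastic P) (hγ : 0 ≤ γ) (π : S → A) (v w : S → ℝ) :
    ‖Tpol P r γ π v - Tpol P r γ π w‖ ≤ γ * ‖v - w‖ := by
  refine (pi_norm_le_iff_of_nonneg (by positivity)).2 fun s => ?_
  have hdiff : (Tpol P r γ π v - Tpol P r γ π w) s = γ * ∑ s', P s (π s) s' * (v - w) s' := by
    simp only [Pi.sub_apply, Tpol, add_sub_add_left_eq_sub, ← mul_sub, ← sum_sub_distrib]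
  rw [hdiff, Real.norm_eq_abs, abs_mul, abs_of_nonneg hγ]
  exact mul_le_mul_of_nonneg_left (hP.abs_sum_mul_le_norm s (π s) _) hγ

lemma Tcomp_succ_add_one (πs : ℕ → S → A) (j n : ℕ) (w : S → ℝ) :
    Tcomp P r γ πs (j + 1) (n + 1) w = Tpol P r γ (πs (j + 1)) (Tcomp P r γ πs j n w) :=
  rfl

lemma norm_sub_Tcomp_le (hP : IsStochastic P) (hγ : 0 ≤ γ) {v : ℕ → S → ℝ} {πs : ℕ → S → A}
    {ε : ℝ} (hstep : ∀ i, ‖v (i + 1) - Tpol P r γ (πs (i + 1)) (v i)‖ ≤ ε) (w : S → ℝ) (j : ℕ) :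
    ∀ n, ‖v (j + n) - Tcomp P r γ πs (j + n) n w‖ ≤
      γ ^ n * ‖v j - w‖ + (∑ i ∈ range n, γ ^ i) * ε
  | 0 => by simp [Tcomp]
  | n + 1 => by
    have ih := norm_sub_Tcomp_le hP hγ hstep w j n
    have hsplit : v (j + n + 1) - Tcomp P r γ πs (j + n + 1) (n + 1) w =
        (v (j + n + 1) - Tpol P r γ (πs (j + n + 1)) (v (j + n))) +
          (Tpol P r γ (πs (j + n + 1)) (v (j + n)) -
            Tpol P r γ (πs (j + n + 1)) (Tcomp P r γ πs (j + n) n w)) := by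
      rw [Tcomp_succ_add_one]; abel
    calc ‖v (j + (n + 1)) - Tcomp P r γ πs (j + (n + 1)) (n + 1) w‖
        ≤ ε + γ * ‖v (j + n) - Tcomp P r γ πs (j + n) n w‖ := by
          rw [← add_assoc, hsplit]
          exact (norm_add_le _ _).trans
            (add_le_add (hstep _) (norm_Tpol_sub_Tpol_le hP hγ _ _ _))
      _ ≤ ε + γ * (γ ^ n * ‖v j - w‖ + (∑ i ∈ range n, γ ^ i) * ε) := by gcongr
      _ = γ ^ (n + 1) * ‖v j - w‖ + (∑ i ∈ range (n + 1), γ ^ i) * ε := by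
          rw [geom_sum_succ]; ring

end

lemma mul_geom_sum_eq_div {K : Type*} [Field K] {x : K} (hx : x ≠ 1) (n : ℕ) :
    x * ∑ i ∈ range n, x ^ i = (x - x ^ (n + 1)) / (1 - x) := by
  rw [eq_div_iff (sub_ne_zero.2 hx.symm)]
  linear_combination x * mul_neg_geom_sum x n

theorem avi_nonstationary_evaluation_general (P : S → A → S → ℝ) (r : S → A → ℝ) (γ : ℝ)
    (hP : IsStochastic P) (hγ0 : 0 < γ) (hγ1 : γ < 1)
    (v : ℕ → S → ℝ) (εf : ℕ → S → ℝ) (ε : ℝ) (πs : ℕ → S → A)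
    (hAVI : ∀ k : ℕ, v (k+1) = Topt P r γ (v k) + εf (k+1))
    (herr : ∀ k : ℕ, 1 ≤ k → ‖εf k‖ ≤ ε)
    (hgreedy : ∀ i : ℕ, Tpol P r γ (πs (i+1)) (v i) = Topt P r γ (v i))
    (k m : ℕ) (hm : 1 ≤ m) (hk : m ≤ k)
    (vkm : S → ℝ) (hfix : Tcomp P r γ πs k m vkm = vkm) :
    ‖Topt P r γ (v (k-1)) - vkm‖ ≤ γ ^ m * ‖v (k-m) - vkm‖ + (γ - γ ^ m) / (1 - γ) * ε := by
  obtain ⟨n, rfl⟩ := Nat.exists_eq_add_of_le' hm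
  obtain ⟨j, rfl⟩ := Nat.exists_eq_add_of_le' hk
  have hstep (i : ℕ) : ‖v (i + 1) - Tpol P r γ (πs (i + 1)) (v i)‖ ≤ ε := by
    rw [hAVI, hgreedy, add_sub_cancel_left]
    exact herr _ (Nat.le_add_left 1 i)
  have hfix' : Tpol P r γ (πs (j + n + 1)) (Tcomp P r γ πs (j + n) n vkm) = vkm := hfix
  rw [Nat.add_sub_cancel, ← add_assoc, Nat.add_sub_cancel, ← hgreedy]
  calc _ = ‖Tpol P r γ (πs (j + n + 1)) (v (j + n)) -
          Tpol P r γ (πs (j + n + 1)) (Tcomp P r γ πs (j + n) n vkm)‖ := by rw [hfix']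
    _ ≤ γ * ‖v (j + n) - Tcomp P r γ πs (j + n) n vkm‖ := norm_Tpol_sub_Tpol_le hP hγ0.le _ _ _
    _ ≤ γ * (γ ^ n * ‖v j - vkm‖ + (∑ i ∈ range n, γ ^ i) * ε) := by
        gcongr; exact norm_sub_Tcomp_le hP hγ0.le hstep vkm j n
    _ = γ ^ (n + 1) * ‖v j - vkm‖ + (γ - γ ^ (n + 1)) / (1 - γ) * ε := by
        rw [← mul_geom_sum_eq_div hγ1.ne]; ring

/-- AVI non-stationary evaluation lemma:
`‖T v_{k−1} − v_{π_{k,m}}‖ ≤ γ^m ‖v_{k−m} − v_{π_{k,m}}‖ + (γ − γ^m)/(1 − γ) ε`. -/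
theorem avi_nonstationary_evaluation (P : S → A → S → ℝ) (r : S → A → ℝ) (γ : ℝ)
    (hP : IsStochastic P) (hγ0 : 0 < γ) (hγ1 : γ < 1)
    (v : ℕ → S → ℝ) (εf : ℕ → S → ℝ) (ε : ℝ) (hε : 0 ≤ ε) (πs : ℕ → S → A)
    (hAVI : ∀ k : ℕ, v (k+1) = Topt P r γ (v k) + εf (k+1))
    (herr : ∀ k : ℕ, 1 ≤ k → ‖εf k‖ ≤ ε)
    (hgreedy : ∀ i : ℕ, Tpol P r γ (πs (i+1)) (v i) = Topt P r γ (v i))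
    (k m : ℕ) (hm : 1 ≤ m) (hk : m ≤ k)
    (vkm : S → ℝ) (hfix : Tcomp P r γ πs k m vkm = vkm) :
    ‖Topt P r γ (v (k-1)) - vkm‖ ≤ γ ^ m * ‖v (k-m) - vkm‖ + (γ - γ ^ m) / (1 - γ) * ε :=
  avi_nonstationary_evaluation_general P r γ hP hγ0 hγ1 v εf ε πs hAVI herr hgreedy k m hm hk vkm
    hfix
end

section
/- Approximate policy improvement for fixed-period API: letting π_{k+1,m} be the periodic policy cycling through π_{k+1}, π_k, …, π_{k+2−m} and π'_{k,m} the periodic policy cycling through π_{k−m+1}, π_k, …, π_{k+2−m}, one has v_{π_{k+1,m}} ≥ v_{π'_{k,m}} − (2γ/(1 − γ^m)) ε (pointwise). -/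
open Finset Filter

variable {S A : Type*} [Fintype S] [Nonempty S] [DecidableEq S] [Fintype A] [Nonempty A]

/-! Let `v' = T_{π_{k-m+1}} v_{k,m}`. As `v_{k,m}` is fixed by the `m`-cycle ending with
`π_{k-m+1}`, one period of `π_{k+1,m}` maps `v'` to `T_{π_{k+1}} v_{k,m}`, which is at least
`v' - 2γε` because `π_{k+1}` is greedy for `v_k = v_{k,m} + ε_k`. One period of a cycle shrinks
upper bounds on `u - w` by the factor `γ^m`, so the largest gap `D = max (v' - v_{k+1,m})`
satisfies `D ≤ 2γε + γ^m D`, i.e. `D ≤ 2γε / (1 - γ^m)`. -/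

theorem le_div_one_sub_of_forall_le {ι : Type*} [Finite ι] (f : ι → ℝ) {a q : ℝ} (hq : q < 1)
    (h : ∀ δ, (∀ i, f i ≤ δ) → ∀ i, f i ≤ a + q * δ) (i : ι) : f i ≤ a / (1 - q) := by
  have : Nonempty ι := ⟨i⟩
  obtain ⟨j, hj⟩ := Finite.exists_max f
  have hfj : f j * (1 - q) ≤ a := by linarith [h (f j) hj j]
  exact (hj i).trans ((le_div_iff₀ (by linarith)).2 hfj)

section Bellman

variable {P : S → A → S → ℝ} (r : S → A → ℝ) (γ : ℝ)

omit [Nonempty S] [DecidableEq S] [Fintype A] [Nonempty A] in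
theorem Pap_le (hP : IsStochastic P) (π : S → A) {v : S → ℝ} {δ : ℝ} (h : ∀ s, v s ≤ δ)
    (s : S) : Pap P π v s ≤ δ :=
  calc Pap P π v s ≤ ∑ s', P s (π s) s' * δ :=
        sum_le_sum fun s' _ => mul_le_mul_of_nonneg_left (h s') (hP.1 _ _ _)
    _ = δ := by rw [← sum_mul, hP.2, one_mul]

omit [Nonempty S] [DecidableEq S] [Fintype A] [Nonempty A] in
theorem Tpol_sub_Tpol (π : S → A) (u w : S → ℝ) (s : S) :
    Tpol P r γ π u s - Tpol P r γ π w s = γ * Pap P π (u - w) s := by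
  simp only [Tpol, Pap, Pi.sub_apply, mul_sub, sum_sub_distrib]
  ring

omit [Nonempty S] [DecidableEq S] [Fintype A] [Nonempty A] in
theorem Tpol_sub_le (hP : IsStochastic P) (hγ : 0 ≤ γ) (π : S → A) {u w : S → ℝ} {δ : ℝ}
    (h : ∀ s, u s - w s ≤ δ) (s : S) : Tpol P r γ π u s - Tpol P r γ π w s ≤ γ * δ := by
  rw [Tpol_sub_Tpol]
  exact mul_le_mul_of_nonneg_left (Pap_le hP π h s) hγ

omit [Nonempty S] [DecidableEq S] [Fintype A] [Nonempty A] in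
theorem Tcomp_sub_le (hP : IsStochastic P) (hγ : 0 ≤ γ) (πs : ℕ → S → A) {u w : S → ℝ}
    {δ : ℝ} (h : ∀ s, u s - w s ≤ δ) :
    ∀ n k s, Tcomp P r γ πs k n u s - Tcomp P r γ πs k n w s ≤ γ ^ n * δ
  | 0, _, s => by simpa [Tcomp] using h s
  | n + 1, k, s => by
    rw [pow_succ', mul_assoc]
    exact Tpol_sub_le r γ hP hγ (πs k) (Tcomp_sub_le hP hγ πs h n (k - 1)) s

omit [Nonempty S] [DecidableEq S] [Fintype A] [Nonempty A] in
theorem Tcomp_succ (πs : ℕ → S → A) :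
    ∀ n k v, Tcomp P r γ πs k (n + 1) v = Tcomp P r γ πs k n (Tpol P r γ (πs (k - n)) v)
  | 0, _, _ => rfl
  | n + 1, k, v => by
    rw [Tcomp, Tcomp_succ πs n (k - 1), Nat.sub_sub, Nat.add_comm 1 n]
    rfl

omit [Nonempty S] [DecidableEq S] in
theorem Tpol_le_Topt (π : S → A) (v : S → ℝ) (s : S) : Tpol P r γ π v s ≤ Topt P r γ v s :=
  le_sup' (fun a => r s a + γ * ∑ s', P s a s' * v s') (mem_univ (π s))

omit [Nonempty S] [DecidableEq S] in
theorem Tpol_sub_le_of_greedy (hP : IsStochastic P) (hγ : 0 ≤ γ) {π₁ : S → A} {v e : S → ℝ}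
    (hgreedy : Tpol P r γ π₁ (v + e) = Topt P r γ (v + e)) (π : S → A) (s : S) :
    Tpol P r γ π v s - 2 * γ * ‖e‖ ≤ Tpol P r γ π₁ v s := by
  have he : ∀ s, -‖e‖ ≤ e s ∧ e s ≤ ‖e‖ := fun s => abs_le.mp (norm_le_pi_norm e s)
  have hπ := Tpol_sub_le r γ hP hγ π (u := v) (w := v + e) (δ := ‖e‖)
    (fun s => by simp only [Pi.add_apply, sub_add_cancel_left]; linarith [he s]) s
  have hπ₁ := Tpol_sub_le r γ hP hγ π₁ (u := v + e) (w := v) (δ := ‖e‖)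
    (fun s => by simp only [Pi.add_apply, add_sub_cancel_left]; linarith [he s]) s
  have hopt : Tpol P r γ π (v + e) s ≤ Tpol P r γ π₁ (v + e) s :=
    hgreedy ▸ Tpol_le_Topt r γ π (v + e) s
  linarith

end Bellman

theorem api_fixed_period_policy_improvement_general (P : S → A → S → ℝ) (r : S → A → ℝ) (γ : ℝ)
    (hP : IsStochastic P) (hγ0 : 0 < γ) (hγ1 : γ < 1)
    (πs : ℕ → S → A) (k m : ℕ) (hm : 1 ≤ m) (hk : m ≤ k)
    (vkm vk1m εk : S → ℝ) (ε : ℝ)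
    (hfix : Tcomp P r γ πs k m vkm = vkm)
    (hfix' : Tcomp P r γ πs (k+1) m vk1m = vk1m)
    (hgreedy : Tpol P r γ (πs (k+1)) (vkm + εk) = Topt P r γ (vkm + εk))
    (herr : ‖εk‖ ≤ ε) :
    ∀ s, Tpol P r γ (πs (k - m + 1)) vkm s - 2 * γ / (1 - γ ^ m) * ε ≤ vk1m s := by
  obtain ⟨n, rfl⟩ : ∃ n, m = n + 1 := ⟨m - 1, by omega⟩
  set v' := Tpol P r γ (πs (k - (n + 1) + 1)) vkm
  have hvkm : Tcomp P r γ πs k n v' = vkm := by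
    rw [Tcomp_succ r γ πs, show k - n = k - (n + 1) + 1 by omega] at hfix
    exact hfix
  have hv' : Tcomp P r γ πs (k + 1) (n + 1) v' = Tpol P r γ (πs (k + 1)) vkm := by
    rw [Tcomp, Nat.add_sub_cancel, hvkm]
  have hgap : ∀ δ, (∀ s, v' s - vk1m s ≤ δ) →
      ∀ s, v' s - vk1m s ≤ 2 * γ * ε + γ ^ (n + 1) * δ := by
    intro δ hδ s
    have hcontr := Tcomp_sub_le r γ hP hγ0.le πs hδ (n + 1) (k + 1) s
    rw [hv', hfix'] at hcontr
    have hgr := Tpol_sub_le_of_greedy r γ hP hγ0.le hgreedy (πs (k - (n + 1) + 1)) s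
    have herr' : 2 * γ * ‖εk‖ ≤ 2 * γ * ε := by gcongr
    linarith
  intro s
  have := le_div_one_sub_of_forall_le (fun s => v' s - vk1m s)
    (pow_lt_one₀ hγ0.le hγ1 (Nat.add_one_ne_zero n)) hgap s
  rw [div_mul_eq_mul_div]
  linarith

/-- Approximate policy improvement for fixed-period API:
`v_{π_{k+1,m}} ≥ v_{π'_{k,m}} − (2γ/(1 − γ^m)) ε` pointwise, where
`v_{π'_{k,m}} = T_{π_{k−m+1}} v_{π_{k,m}}`. -/
theorem api_fixed_period_policy_improvement (P : S → A → S → ℝ) (r : S → A → ℝ) (γ : ℝ)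
    (hP : IsStochastic P) (hγ0 : 0 < γ) (hγ1 : γ < 1)
    (πs : ℕ → S → A) (k m : ℕ) (hm : 1 ≤ m) (hk : m ≤ k)
    (vkm vk1m εk : S → ℝ) (ε : ℝ) (hε : 0 ≤ ε)
    (hfix : Tcomp P r γ πs k m vkm = vkm)
    (hfix' : Tcomp P r γ πs (k+1) m vk1m = vk1m)
    (hgreedy : Tpol P r γ (πs (k+1)) (vkm + εk) = Topt P r γ (vkm + εk))
    (herr : ‖εk‖ ≤ ε) :
    ∀ s, Tpol P r γ (πs (k - m + 1)) vkm s - 2 * γ / (1 - γ ^ m) * ε ≤ vk1m s :=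
  api_fixed_period_policy_improvement_general P r γ hP hγ0 hγ1 πs k m hm hk vkm vk1m εk ε hfix hfix'
    hgreedy herr
end
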